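/- Let t be a rooted tree with pairwise distinct leaf labels, S a set of labels, and a a leaf label of t with a ∉ S. Then the set of vertices that are complete with respect to S ∪ {a} but not complete with respect to S is exactly { v : a ∈ L(v) and L(v) ⊆ S ∪ {a} }, and this set is totally ordered by the ancestor relation (it forms a chain of ancestors of the leaf labeled a, starting at that leaf). -/

import Mathlib

/-!
With distinct leaf labels, `counter S v = |L v|` holds exactly when `L v ⊆ S`: inductively, a
child contributes its full count `|L w|` when it is complete and `0` otherwise, and `|L v|` is the
sum of the `|L w|`. Hence the vertices complete for `S ∪ {a}` but not for `S` are those with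
`L v ⊆ S ∪ {a}` and `L v ⊄ S`, i.e. those with `a ∈ L v ⊆ S ∪ {a}`. Two vertices containing the
leaf `a` are comparable, since distinct children of a vertex have disjoint label sets.
-/

inductive RTree (α : Type*) where
  | leaf (a : α)
  | node (children : List (RTree α))

namespace RTree

variable {α : Type*} [DecidableEq α]

/-- The list of leaf labels of a tree. -/
def leafList : RTree α → List α
  | leaf a => [a]
  | node cs => (cs.attach.map fun ⟨w, _⟩ => leafList w).flatten
decreasing_by have := List.sizeOf_lt_of_mem ‹_›; simp only [node.sizeOf_spec]; omega

/-- `L v` is the finite set of labels of leaves in the subtree rooted at `v`. -/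
def L (v : RTree α) : Finset α := (leafList v).toFinset

/-- The counter function. -/
def counter (S : Finset α) : RTree α → ℕ
  | leaf a => if a ∈ S then 1 else 0
  | node cs =>
      (cs.attach.map fun ⟨w, _⟩ =>
        if counter S w = (L w).card then counter S w else 0).sum
decreasing_by have := List.sizeOf_lt_of_mem ‹_›; simp only [node.sizeOf_spec]; omega

/-- `IsVertex v t` means that `v` is a vertex (subtree) of `t`. -/
inductive IsVertex : RTree α → RTree α → Prop
  | refl (t : RTree α) : IsVertex t t
  | child {v w : RTree α} {cs : List (RTree α)} : w ∈ cs → IsVertex v w → IsVertex v (node cs)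

/-- The list of all vertices (subtrees) of a tree. -/
def vertexList : RTree α → List (RTree α)
  | leaf a => [leaf a]
  | node cs => node cs :: (cs.attach.map fun ⟨w, _⟩ => vertexList w).flatten
decreasing_by have := List.sizeOf_lt_of_mem ‹_›; simp only [node.sizeOf_spec]; omega

omit [DecidableEq α] in
@[elab_as_elim]
theorem induction_on {motive : RTree α → Prop} (t : RTree α) (leaf : ∀ a, motive (.leaf a))
    (node : ∀ cs, (∀ c ∈ cs, motive c) → motive (.node cs)) : motive t :=
  match t with
  | .leaf a => leaf a
  | .node cs => node cs fun c _ => induction_on c leaf node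
decreasing_by have := List.sizeOf_lt_of_mem ‹_›; simp only [RTree.node.sizeOf_spec]; omega

omit [DecidableEq α] in
theorem leafList_node (cs : List (RTree α)) :
    leafList (node cs) = (cs.map leafList).flatten := by
  rw [leafList]
  simp

theorem counter_node (S : Finset α) (cs : List (RTree α)) :
    counter S (node cs) =
      (cs.map fun c => if counter S c = (L c).card then counter S c else 0).sum := by
  rw [counter]
  simp

@[simp]
theorem mem_L {v : RTree α} {x : α} : x ∈ L v ↔ x ∈ leafList v := List.mem_toFinset

theorem L_node_subset_iff {cs : List (RTree α)} {S : Finset α} :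
    L (node cs) ⊆ S ↔ ∀ c ∈ cs, L c ⊆ S := by
  simp only [Finset.subset_iff, mem_L, leafList_node, List.mem_flatten, List.mem_map]
  grind

omit [DecidableEq α] in
theorem nodup_leafList_node {cs : List (RTree α)} :
    (leafList (node cs)).Nodup ↔
      (∀ c ∈ cs, (leafList c).Nodup) ∧ cs.Pairwise fun c d => (leafList c).Disjoint (leafList d) := by
  simp [leafList_node, List.nodup_flatten, List.pairwise_map]

theorem card_L_of_nodup {v : RTree α} (hnd : (leafList v).Nodup) :
    (L v).card = (leafList v).length :=
  List.toFinset_card_of_nodup hnd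

theorem card_L_node {cs : List (RTree α)} (hnd : (leafList (node cs)).Nodup) :
    (L (node cs)).card = (cs.map fun c => (L c).card).sum := by
  rw [card_L_of_nodup hnd, leafList_node, List.length_flatten, List.map_map]
  exact congrArg List.sum <| List.map_congr_left fun c hc =>
    (card_L_of_nodup (nodup_leafList_node.1 hnd |>.1 c hc)).symm

omit [DecidableEq α] in
theorem IsVertex.leafList_sublist {v t : RTree α} (h : IsVertex v t) :
    (leafList v).Sublist (leafList t) := by
  induction h with
  | refl => exact .refl _
  | child hc _ ih =>
    rw [leafList_node]
    exact ih.trans (List.sublist_flatten_of_mem (List.mem_map_of_mem hc))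

omit [DecidableEq α] in
theorem isVertex_leaf_of_mem_leafList {a : α} {t : RTree α} (ha : a ∈ leafList t) :
    IsVertex (leaf a) t := by
  induction t using induction_on with
  | leaf b =>
    rw [leafList, List.mem_singleton] at ha
    exact ha ▸ .refl _
  | node cs ih =>
    rw [leafList_node, List.mem_flatten] at ha
    obtain ⟨_, hl, hal⟩ := ha
    obtain ⟨c, hc, rfl⟩ := List.mem_map.1 hl
    exact .child hc (ih c hc hal)

theorem counter_le_card_L (S : Finset α) {v : RTree α} (hnd : (leafList v).Nodup) :
    counter S v ≤ (L v).card := by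
  cases v with
  | leaf a => simp only [counter, L, leafList]; split <;> simp
  | node cs =>
    rw [counter_node, card_L_node hnd]
    exact List.sum_le_sum fun c _ => by split <;> omega

theorem _root_.List.sum_map_eq_sum_map_iff_of_le {ι M : Type*} [AddCommMonoid M] [PartialOrder M]
    [IsOrderedCancelAddMonoid M] {l : List ι} {f g : ι → M}
    (h : ∀ i ∈ l, f i ≤ g i) : (l.map f).sum = (l.map g).sum ↔ ∀ i ∈ l, f i = g i := by
  refine ⟨fun hsum => ?_, fun hfg => congrArg List.sum (List.map_congr_left hfg)⟩
  by_contra! ⟨i, hi, hne⟩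
  exact (List.sum_lt_sum f g h ⟨i, hi, lt_of_le_of_ne (h i hi) hne⟩).ne hsum

theorem counter_eq_card_L_iff (S : Finset α) {v : RTree α} (hnd : (leafList v).Nodup) :
    counter S v = (L v).card ↔ L v ⊆ S := by
  induction v using induction_on with
  | leaf a => by_cases a ∈ S <;> simp [counter, L, leafList, *]
  | node cs ih =>
    have hnd_child := (nodup_leafList_node.1 hnd).1
    rw [counter_node, card_L_node hnd, List.sum_map_eq_sum_map_iff_of_le
      fun c _ => by split <;> omega, L_node_subset_iff]
    refine forall₂_congr fun c hc => ?_
    rw [← ih c hc (hnd_child c hc)]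
    have := counter_le_card_L S (hnd_child c hc)
    split <;> omega

omit [DecidableEq α] in
theorem isVertex_total_of_mem_leafList {a : α} {t v w : RTree α} (hnd : (leafList t).Nodup)
    (hv : IsVertex v t) (hw : IsVertex w t) (hav : a ∈ leafList v) (haw : a ∈ leafList w) :
    IsVertex v w ∨ IsVertex w v := by
  induction t using induction_on generalizing v w with
  | leaf b =>
    cases hv; cases hw
    exact .inl (.refl _)
  | node cs ih =>
    cases hv with
    | refl => exact .inr hw
    | @child c _ hc hvc =>
      cases hw with
      | refl => exact .inl (.child hc hvc)
      | @child d _ hd hwd =>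
        have hac := hvc.leafList_sublist.subset hav
        have had := hwd.leafList_sublist.subset haw
        obtain ⟨hnd_child, hdisj⟩ := nodup_leafList_node.1 hnd
        obtain rfl : c = d := by
          by_contra hcd
          have : Std.Symm fun c d : RTree α => (leafList c).Disjoint (leafList d) :=
            ⟨fun _ _ h => h.symm⟩
          exact hdisj.forall hc hd hcd hac had
        exact ih c hc (hnd_child c hc) hvc hwd hav haw

theorem _root_.Finset.subset_insert_and_not_subset_iff {s t : Finset α} {a : α} (ha : a ∉ t) :
    s ⊆ insert a t ∧ ¬s ⊆ t ↔ a ∈ s ∧ s ⊆ insert a t := by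
  refine ⟨fun ⟨hst, hns⟩ => ⟨?_, hst⟩, fun ⟨has, hst⟩ => ⟨hst, fun h => ha (h has)⟩⟩
  by_contra has
  exact hns ((Finset.subset_insert_iff_of_notMem has).1 hst)

theorem newly_complete_chain_general (t : RTree α) (hnd : t.leafList.Nodup)
    (S : Finset α) (a : α) (haS : a ∉ S) :
    (∀ v : RTree α, IsVertex v t →
        ((counter (insert a S) v = (L v).card ∧ counter S v ≠ (L v).card) ↔
          (a ∈ L v ∧ L v ⊆ insert a S))) ∧
      (∀ v w : RTree α, IsVertex v t → IsVertex w t →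
        (a ∈ L v ∧ L v ⊆ insert a S) → (a ∈ L w ∧ L w ⊆ insert a S) →
        IsVertex v w ∨ IsVertex w v) ∧
      (∀ v : RTree α, IsVertex v t → (a ∈ L v ∧ L v ⊆ insert a S) →
        IsVertex (leaf a) v) := by
  refine ⟨fun v hv => ?_, fun v w hv hw hav haw => ?_, fun v _ hav => ?_⟩
  · have hndv := hv.leafList_sublist.nodup hnd
    rw [Ne, counter_eq_card_L_iff _ hndv, counter_eq_card_L_iff _ hndv]
    exact Finset.subset_insert_and_not_subset_iff haS
  · exact isVertex_total_of_mem_leafList hnd hv hw (mem_L.1 hav.1) (mem_L.1 haw.1)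
  · exact isVertex_leaf_of_mem_leafList (mem_L.1 hav.1)

/-- for a leaf label `a ∉ S`, the set of vertices complete w.r.t. `S ∪ {a}` but
not w.r.t. `S` is exactly `{v : a ∈ L(v) ∧ L(v) ⊆ S ∪ {a}}`; this set is totally ordered by
the ancestor relation, forming a chain of ancestors of the leaf labeled `a` starting at that
leaf. -/
theorem newly_complete_chain (t : RTree α) (hnd : t.leafList.Nodup)
    (S : Finset α) (a : α) (ha : a ∈ leafList t) (haS : a ∉ S) :
    (∀ v : RTree α, IsVertex v t →
        ((counter (insert a S) v = (L v).card ∧ counter S v ≠ (L v).card) ↔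
          (a ∈ L v ∧ L v ⊆ insert a S))) ∧
      (∀ v w : RTree α, IsVertex v t → IsVertex w t →
        (a ∈ L v ∧ L v ⊆ insert a S) → (a ∈ L w ∧ L w ⊆ insert a S) →
        IsVertex v w ∨ IsVertex w v) ∧
      (∀ v : RTree α, IsVertex v t → (a ∈ L v ∧ L v ⊆ insert a S) →
        IsVertex (leaf a) v) :=
  newly_complete_chain_general t hnd S a haS

end RTree
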